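/- arXiv:2401.14340 — 2 statements merged into one kernel-verified Lean document; each statement's English description precedes it below -/
import Mathlib

section
/- For every positive definite real symmetric n×n matrix V, there exists a unique positive definite matrix Θ* ∈ C that maximizes f(Θ; V) = log det Θ − tr(V Θ) over all positive definite real symmetric n×n matrices Θ belonging to C. -/
open Matrix

/-- `maxProp n Z V Θ` says that `Θ` is a positive definite matrix in the constraint set
`C = {Θ symmetric : Θ_ij = 0 for (i,j) ∈ Z}` maximizing `f(·; V) = log det · − tr (V ·)`
over positive definite matrices in `C`. -/
def maxProp (n : ℕ) (Z : Set (Fin n × Fin n)) (V Θ : Matrix (Fin n) (Fin n) ℝ) : Prop :=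
  Θ.PosDef ∧ (∀ p ∈ Z, Θ p.1 p.2 = 0) ∧
    ∀ Θ' : Matrix (Fin n) (Fin n) ℝ, Θ'.PosDef → (∀ p ∈ Z, Θ' p.1 p.2 = 0) →
      Real.log Θ'.det - (V * Θ').trace ≤ Real.log Θ.det - (V * Θ).trace

/-!
The objective `f(Θ) = log det Θ - tr (V Θ)` is strictly concave on positive definite matrices:
writing `A = S S` and `B = S M S` with `S = √A`, strict concavity of `log det` reduces to
strict concavity of `log` on the eigenvalues of `M`. This gives uniqueness of a maximizer on
the convex set `C`.
For existence, `tr (V Θ) ≥ ε tr Θ` for some `ε > 0` and `log det Θ ≤ (ε / 2) tr Θ + const`,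
so on the superlevel set `{f ≥ f 1}` the determinant is bounded below and the trace above.
Hence that set lies in a compact set of positive definite matrices, on which `f` is continuous,
and a maximizer of `f` there maximizes `f` on all of `C`.
-/

namespace Matrix

variable {n : Type*}

lemma convex_setOf_posDef : Convex ℝ {A : Matrix n n ℝ | A.PosDef} :=
  convex_iff_forall_pos.2 fun _ hA _ hB _ _ ha hb _ => (hA.smul ha).add (hB.smul hb)

variable [Fintype n]

lemma PosSemidef.diag_le_trace {A : Matrix n n ℝ} (hA : A.PosSemidef) (i : n) : A i i ≤ A.trace :=
  Finset.single_le_sum (f := fun k => A k k) (fun _ _ => hA.diag_nonneg) (Finset.mem_univ i)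

lemma PosSemidef.abs_apply_le_trace {A : Matrix n n ℝ} (hA : A.PosSemidef) (i j : n) :
    |A i j| ≤ A.trace := by
  have hdet := (hA.submatrix ![i, j]).det_nonneg
  have hji : A j i = A i j := by simpa using hA.1.apply i j
  rw [det_fin_two] at hdet
  simp only [submatrix_apply, Matrix.cons_val_zero, Matrix.cons_val_one, hji] at hdet
  refine abs_le_of_sq_le_sq (?_ : A i j ^ 2 ≤ A.trace ^ 2) hA.trace_nonneg
  nlinarith [hA.diag_nonneg (i := i), hA.diag_nonneg (i := j), hA.diag_le_trace i,
    hA.diag_le_trace j]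

lemma isClosed_setOf_posSemidef : IsClosed {A : Matrix n n ℝ | A.PosSemidef} := by
  simp_rw [posSemidef_iff_dotProduct_mulVec, Set.ofPred_and, Set.ofPred_forall]
  exact (isClosed_eq (by fun_prop) continuous_id).inter
    (isClosed_iInter fun x => isClosed_le continuous_const (by fun_prop))

lemma isCompact_setOf_posSemidef_trace_le (T : ℝ) :
    IsCompact {A : Matrix n n ℝ | A.PosSemidef ∧ A.trace ≤ T} := by
  have hbox : IsCompact (Set.univ.pi fun _ : n => Set.univ.pi fun _ : n => Set.Icc (-T) T) :=
    isCompact_univ_pi fun _ => isCompact_univ_pi fun _ => isCompact_Icc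
  refine hbox.of_isClosed_subset
    (isClosed_setOf_posSemidef.inter (isClosed_le continuous_id.matrix_trace continuous_const))
    fun A ⟨hA, hT⟩ => ?_
  simp only [Set.mem_pi, Set.mem_univ, true_implies, Set.mem_Icc, ← abs_le]
  exact fun i j => (hA.abs_apply_le_trace i j).trans hT

variable [DecidableEq n]

open scoped MatrixOrder in
lemma PosSemidef.trace_mul_nonneg {A B : Matrix n n ℝ} (hA : A.PosSemidef) (hB : B.PosSemidef) :
    0 ≤ (A * B).trace := by
  obtain ⟨C, rfl⟩ := CStarAlgebra.nonneg_iff_eq_star_mul_self.mp hB.nonneg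
  rw [← Matrix.mul_assoc, trace_mul_cycle]
  exact (hA.mul_mul_conjTranspose_same C).trace_nonneg

open scoped MatrixOrder in
lemma PosDef.exists_pos_mul_trace_le {V : Matrix n n ℝ} (hV : V.PosDef) :
    ∃ ε : ℝ, 0 < ε ∧ ∀ A : Matrix n n ℝ, A.PosSemidef → ε * A.trace ≤ (V * A).trace := by
  rcases isEmpty_or_nonempty n with hn | hn
  · exact ⟨1, one_pos, fun A _ => by simp [trace]⟩
  obtain ⟨ε, hε, hεV⟩ := (CFC.exists_pos_algebraMap_le_iff hV.isHermitian.isSelfAdjoint).2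
    fun x hx => hV.isStrictlyPositive.spectrum_pos hx
  refine ⟨ε, hε, fun A hA => ?_⟩
  have h := (Matrix.le_iff.mp hεV).trace_mul_nonneg hA
  rw [Algebra.algebraMap_eq_smul_one, Matrix.sub_mul, trace_sub, smul_mul_assoc, Matrix.one_mul,
    trace_smul, smul_eq_mul] at h
  linarith

lemma PosDef.log_det_le_mul_trace {A : Matrix n n ℝ} (hA : A.PosDef) {a : ℝ} (ha : 0 < a) :
    Real.log A.det ≤ a * A.trace - Fintype.card n * (Real.log a + 1) := by
  have hpos := hA.eigenvalues_pos
  have hterm (i : n) :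
      Real.log (hA.1.eigenvalues i) ≤ a * hA.1.eigenvalues i - (Real.log a + 1) := by
    have := Real.log_le_sub_one_of_pos (mul_pos ha (hpos i))
    rw [Real.log_mul ha.ne' (hpos i).ne'] at this
    linarith
  rw [hA.1.det_eq_prod_eigenvalues, hA.1.trace_eq_sum_eigenvalues]
  simp only [RCLike.ofReal_real_eq_id, id]
  rw [Real.log_prod fun i _ => (hpos i).ne', Finset.mul_sum, ← Finset.card_univ, ← nsmul_eq_mul,
    ← Finset.sum_const, ← Finset.sum_sub_distrib]
  exact Finset.sum_le_sum fun i _ => hterm i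

lemma PosDef.exp_le_det_and_trace_le_of_le {V A : Matrix n n ℝ} {ε c : ℝ} (hε : 0 < ε)
    (hV : ∀ B : Matrix n n ℝ, B.PosSemidef → ε * B.trace ≤ (V * B).trace) (hA : A.PosDef)
    (hc : c ≤ Real.log A.det - (V * A).trace) :
    Real.exp c ≤ A.det ∧ A.trace ≤ 2 * (-(Fintype.card n * (Real.log (ε / 2) + 1)) - c) / ε := by
  have hVA := hV A hA.posSemidef
  have htr := hA.posSemidef.trace_nonneg
  refine ⟨(Real.le_log_iff_exp_le hA.det_pos).1 (by nlinarith), ?_⟩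
  have := hA.log_det_le_mul_trace (half_pos hε)
  rw [le_div_iff₀ hε]
  linarith

theorem exists_isMaxOn_log_det_sub_trace_mul {V : Matrix n n ℝ} (hV : V.PosDef)
    {K : Set (Matrix n n ℝ)} (hK : IsClosed K) {Θ₀ : Matrix n n ℝ} (hΘ₀K : Θ₀ ∈ K)
    (hΘ₀ : Θ₀.PosDef) :
    ∃ Θ ∈ K ∩ {A | A.PosDef},
      IsMaxOn (fun A => Real.log A.det - (V * A).trace) (K ∩ {A | A.PosDef}) Θ := by
  set f := fun A : Matrix n n ℝ => Real.log A.det - (V * A).trace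
  obtain ⟨ε, hε, hVε⟩ := hV.exists_pos_mul_trace_le
  set T := 2 * (-(Fintype.card n * (Real.log (ε / 2) + 1)) - f Θ₀) / ε
  set L := K ∩ {A | A.PosSemidef ∧ A.trace ≤ T} ∩ {A | Real.exp (f Θ₀) ≤ A.det}
  have hLpos {A} (hA : A ∈ L) : A.PosDef :=
    hA.1.2.1.posDef_iff_det_ne_zero.2 ((Real.exp_pos _).trans_le hA.2).ne'
  have hL : IsCompact L :=
    ((isCompact_setOf_posSemidef_trace_le T).inter_left hK).inter_right
      (isClosed_le continuous_const continuous_id.matrix_det)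
  have hsuper {A} (hA : A ∈ K ∩ {A | A.PosDef}) (hle : f Θ₀ ≤ f A) : A ∈ L := by
    obtain ⟨hdet, htr⟩ := hA.2.exp_le_det_and_trace_le_of_le hε hVε hle
    exact ⟨⟨hA.1, hA.2.posSemidef, htr⟩, hdet⟩
  have hcont : ContinuousOn f L := fun A hA =>
    (((Real.continuousAt_log (hLpos hA).det_pos.ne').comp
      continuous_id.matrix_det.continuousAt).sub
        (continuous_const.matrix_mul continuous_id).matrix_trace.continuousAt).continuousWithinAt
  obtain ⟨Θ, hΘL, hmax⟩ := hL.exists_isMaxOn ⟨Θ₀, hsuper ⟨hΘ₀K, hΘ₀⟩ le_rfl⟩ hcont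
  refine ⟨Θ, ⟨hΘL.1.1, hLpos hΘL⟩, fun A hA => ?_⟩
  rcases le_total (f Θ₀) (f A) with hle | hle
  · exact hmax (hsuper hA hle)
  · exact hle.trans (hmax (hsuper ⟨hΘ₀K, hΘ₀⟩ le_rfl))

lemma IsHermitian.det_smul_one_add_smul {M : Matrix n n ℝ} (hM : M.IsHermitian) (a b : ℝ) :
    (a • 1 + b • M).det = ∏ i, (a + b * hM.eigenvalues i) := by
  have hdiag : a • 1 + b • diagonal (RCLike.ofReal ∘ hM.eigenvalues) =
      diagonal fun i => a + b * hM.eigenvalues i := by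
    ext i j; by_cases h : i = j <;> simp [h]
  conv_lhs => rw [hM.spectral_theorem,
    ← map_one (Unitary.conjStarAlgAut ℝ _ hM.eigenvectorUnitary), ← map_smul, ← map_smul,
    ← map_add, hdiag, Unitary.conjStarAlgAut_apply, det_mul_right_comm,
    Unitary.mul_star_self_of_mem hM.eigenvectorUnitary.2, Matrix.one_mul, det_diagonal]

lemma IsHermitian.eq_one_of_eigenvalues_eq_one {M : Matrix n n ℝ} (hM : M.IsHermitian)
    (h : ∀ i, hM.eigenvalues i = 1) : M = 1 := by
  rw [hM.spectral_theorem, ← map_one (Unitary.conjStarAlgAut ℝ _ hM.eigenvectorUnitary)]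
  congr 1
  simp [funext h]

lemma PosDef.mul_log_det_lt_log_det_smul_one_add_smul {M : Matrix n n ℝ} (hM : M.PosDef)
    (hM1 : M ≠ 1) {a b : ℝ} (ha : 0 < a) (hb : 0 < b) (hab : a + b = 1) :
    b * Real.log M.det < Real.log (a • 1 + b • M).det := by
  have hpos := hM.eigenvalues_pos
  have hlog {t : ℝ} (ht : 0 < t) (ht1 : t ≠ 1) : b * Real.log t < Real.log (a + b * t) := by
    simpa using
      strictConcaveOn_log_Ioi.2 (Set.mem_Ioi.2 one_pos) (Set.mem_Ioi.2 ht) ht1.symm ha hb hab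
  obtain ⟨j, hj⟩ : ∃ j, hM.1.eigenvalues j ≠ 1 := by
    by_contra! h
    exact hM1 (hM.1.eq_one_of_eigenvalues_eq_one h)
  rw [hM.1.det_smul_one_add_smul, hM.1.det_eq_prod_eigenvalues]
  simp only [RCLike.ofReal_real_eq_id, id]
  rw [Real.log_prod fun i _ => (hpos i).ne', Real.log_prod fun i _ => by nlinarith [hpos i],
    Finset.mul_sum]
  refine Finset.sum_lt_sum (fun i _ => ?_) ⟨j, Finset.mem_univ j, hlog (hpos j) hj⟩
  rcases eq_or_ne (hM.1.eigenvalues i) 1 with h | h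
  · simp [h, hab]
  · exact (hlog (hpos i) h).le

open scoped MatrixOrder in
lemma PosDef.exists_eq_mul_self_and_eq_mul_mul {A B : Matrix n n ℝ} (hA : A.PosDef)
    (hB : B.PosDef) :
    ∃ S M : Matrix n n ℝ, IsUnit S.det ∧ M.PosDef ∧ A = S * S ∧ B = S * M * S := by
  have hS := hA.isStrictlyPositive.sqrt
  set S := CFC.sqrt A
  have hSdet : IsUnit S.det := (isUnit_iff_isUnit_det S).1 hS.isUnit
  refine ⟨S, S⁻¹ * B * S⁻¹, hSdet, ?_, (CFC.sqrt_mul_sqrt_self A).symm, ?_⟩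
  · have := hB.conjTranspose_mul_mul_same
      (mulVec_injective_iff_isUnit.2 (isUnit_nonsing_inv_iff.2 hS.isUnit))
    rwa [conjTranspose_nonsing_inv, show Sᴴ = S from hS.isSelfAdjoint] at this
  · simp only [← Matrix.mul_assoc, mul_nonsing_inv S hSdet, Matrix.one_mul]
    rw [Matrix.mul_assoc, nonsing_inv_mul S hSdet, Matrix.mul_one]

theorem strictConcaveOn_log_det :
    StrictConcaveOn ℝ {A : Matrix n n ℝ | A.PosDef} fun A => Real.log A.det := by
  refine ⟨convex_setOf_posDef, fun A hA B hB hAB a b ha hb hab => ?_⟩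
  obtain ⟨S, M, hS, hM, rfl, rfl⟩ := PosDef.exists_eq_mul_self_and_eq_mul_mul hA hB
  have hM1 : M ≠ 1 := by rintro rfl; exact hAB (by rw [Matrix.mul_one])
  have hmix : a • (S * S) + b • (S * M * S) = S * (a • 1 + b • M) * S := by
    simp only [Matrix.mul_add, Matrix.add_mul, Matrix.mul_smul, Matrix.smul_mul, Matrix.mul_one]
  have hlog {X : ℝ} (hX : X ≠ 0) :
      Real.log (S.det * X * S.det) = Real.log (S.det * S.det) + Real.log X := by
    rw [mul_right_comm, Real.log_mul (mul_ne_zero hS.ne_zero hS.ne_zero) hX]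
  have hmixpos : (a • 1 + b • M).PosDef := (PosDef.one.smul ha).add (hM.smul hb)
  have key := hM.mul_log_det_lt_log_det_smul_one_add_smul hM1 ha hb hab
  simp only [smul_eq_mul, hmix, det_mul]
  rw [hlog hM.det_pos.ne', hlog hmixpos.det_pos.ne']
  linear_combination key + Real.log (S.det * S.det) * hab

theorem strictConcaveOn_log_det_sub_trace_mul (V : Matrix n n ℝ) :
    StrictConcaveOn ℝ {A : Matrix n n ℝ | A.PosDef} fun A => Real.log A.det - (V * A).trace :=
  strictConcaveOn_log_det.sub_convexOn
    (((traceLinearMap n ℝ ℝ).comp (LinearMap.mulLeft ℝ V)).convexOn convex_setOf_posDef)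

end Matrix

theorem existsUnique_constrained_maximizer_general (n : ℕ)
    (Z : Set (Fin n × Fin n)) (hZoffdiag : ∀ p ∈ Z, p.1 ≠ p.2)
    (V : Matrix (Fin n) (Fin n) ℝ) (hV : V.PosDef) :
    ∃! Θs : Matrix (Fin n) (Fin n) ℝ, maxProp n Z V Θs := by
  set C := {Θ : Matrix (Fin n) (Fin n) ℝ | ∀ p ∈ Z, Θ p.1 p.2 = 0}
  set D := C ∩ {Θ | Θ.PosDef}
  have hC : IsClosed C := by
    simp_rw [C, Set.ofPred_forall]
    exact isClosed_iInter fun p => isClosed_iInter fun _ =>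
      isClosed_eq (by fun_prop) continuous_const
  have hCconv : Convex ℝ C := fun A hA B hB a b _ _ _ p hp => by simp [hA p hp, hB p hp]
  have hmaxProp_iff (Θ) : maxProp n Z V Θ ↔
      Θ ∈ D ∧ IsMaxOn (fun A => Real.log A.det - (V * A).trace) D Θ :=
    ⟨fun ⟨hpos, hΘC, hle⟩ => ⟨⟨hΘC, hpos⟩, fun A hA => hle A hA.2 hA.1⟩,
      fun ⟨⟨hΘC, hpos⟩, hle⟩ => ⟨hpos, hΘC, fun A hA hAC => hle ⟨hAC, hA⟩⟩⟩
  obtain ⟨Θ, hΘ, hΘmax⟩ := exists_isMaxOn_log_det_sub_trace_mul hV hC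
    (fun p hp => one_apply_ne (hZoffdiag p hp)) PosDef.one
  refine ⟨Θ, (hmaxProp_iff Θ).2 ⟨hΘ, hΘmax⟩, fun Θ' hΘ' => ?_⟩
  obtain ⟨hΘ'D, hΘ'max⟩ := (hmaxProp_iff Θ').1 hΘ'
  exact ((strictConcaveOn_log_det_sub_trace_mul V).subset Set.inter_subset_right
    (hCconv.inter convex_setOf_posDef)).eq_of_isMaxOn hΘ'max hΘmax hΘ'D hΘ

/-- For every positive definite real symmetric `n × n` matrix `V`, there exists a unique
positive definite matrix `Θ* ∈ C` maximizing `f(Θ; V) = log det Θ − tr (V Θ)` over all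
positive definite matrices `Θ ∈ C`, where `C` is the set of symmetric matrices vanishing
on a symmetric set `Z` of off-diagonal index pairs. -/
theorem existsUnique_constrained_maximizer (n : ℕ) (hn : 0 < n)
    (Z : Set (Fin n × Fin n)) (hZoffdiag : ∀ p ∈ Z, p.1 ≠ p.2)
    (hZsymm : ∀ i j : Fin n, (i, j) ∈ Z → (j, i) ∈ Z)
    (V : Matrix (Fin n) (Fin n) ℝ) (hV : V.PosDef) :
    ∃! Θs : Matrix (Fin n) (Fin n) ℝ, maxProp n Z V Θs :=
  existsUnique_constrained_maximizer_general n Z hZoffdiag V hV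
end

section
/- Let Σ₀ be a positive definite real symmetric n×n matrix and let x₁, x₂, … be i.i.d. random vectors in ℝⁿ, each distributed as the centered multivariate Gaussian with covariance Σ₀. If k ≥ n, then the sample covariance matrix S_k = (1/k) ∑_{i=1}^k x_i x_iᵀ is positive definite almost surely. -/
/-! A Gaussian law with nonsingular covariance is the image of the standard Gaussian under the
invertible map `S₀^{1/2}`, so it is absolutely continuous with respect to Lebesgue measure and
gives zero mass to every proper subspace. By independence and Fubini, each `X j` with `j < n`
therefore almost surely avoids the span of `X 0, …, X (j - 1)`, so `X 0, …, X (n - 1)` are almost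
surely linearly independent. Finally `v ⬝ S_k v = k⁻¹ ∑_{t < k} (X t ⬝ v)²`, which is positive for
`v ≠ 0` as soon as the `X t` span `ℝⁿ`. -/

open Matrix MeasureTheory ProbabilityTheory Filter

/-- The centered multivariate Gaussian measure on `ℝⁿ` with (positive semidefinite)
covariance matrix `S₀`: the law of `S₀^{1/2} z` where `z` has i.i.d. standard normal
entries. -/
noncomputable def gaussianCov (n : ℕ) (S₀ : Matrix (Fin n) (Fin n) ℝ)
    (hS₀ : S₀.PosSemidef) : Measure (Fin n → ℝ) :=
  Measure.map (fun z => ((hS₀.1.eigenvectorUnitary : Matrix (Fin n) (Fin n) ℝ) *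
      diagonal (fun i => Real.sqrt (hS₀.1.eigenvalues i)) *
      (star hS₀.1.eigenvectorUnitary : Matrix (Fin n) (Fin n) ℝ)).mulVec z)
    (Measure.pi fun _ : Fin n => gaussianReal 0 1)

/-- The sample covariance matrix `S_k = (1/k) ∑_{i<k} x_i x_iᵀ` of vectors
`x_0, x_1, …` in `ℝⁿ`. -/
noncomputable def sampleCov (n : ℕ) (x : ℕ → Fin n → ℝ) (k : ℕ) :
    Matrix (Fin n) (Fin n) ℝ :=
  (k : ℝ)⁻¹ • ∑ i ∈ Finset.range k, vecMulVec (x i) (x i)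

open scoped MatrixOrder
open Module

lemma Matrix.eq_zero_of_span_eq_top_of_dotProduct_eq_zero {R m ι : Type*} [Fintype m]
    [CommRing R] [LinearOrder R] [IsStrictOrderedRing R] {y : ι → m → R}
    (hy : Submodule.span R (Set.range y) = ⊤) {v : m → R} (h : ∀ i, y i ⬝ᵥ v = 0) : v = 0 := by
  have hker : Set.range y ⊆ LinearMap.ker ((dotProductBilin R R).flip v) := by
    rintro _ ⟨i, rfl⟩
    simpa using h i
  have hv : v ∈ LinearMap.ker ((dotProductBilin R R).flip v) :=
    Submodule.span_le.mpr hker (hy ▸ Submodule.mem_top)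
  exact dotProduct_self_eq_zero.mp (by simpa using hv)

lemma dotProduct_sampleCov_mulVec (n : ℕ) (x : ℕ → Fin n → ℝ) (k : ℕ) (v : Fin n → ℝ) :
    v ⬝ᵥ (sampleCov n x k *ᵥ v) = (k : ℝ)⁻¹ * ∑ t ∈ Finset.range k, (x t ⬝ᵥ v) ^ 2 := by
  simp [sampleCov, smul_mulVec, sum_mulVec, vecMulVec_mulVec, sum_dotProduct, dotProduct_comm v,
    sq]

lemma sampleCov_posSemidef (n : ℕ) (x : ℕ → Fin n → ℝ) (k : ℕ) :
    (sampleCov n x k).PosSemidef :=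
  (posSemidef_sum _ fun t _ => by
    simpa only [star_trivial] using posSemidef_vecMulVec_self_star (x t)).smul (by positivity)

lemma sampleCov_posDef_of_linearIndependent {n k : ℕ} (hk : n ≤ k) {x : ℕ → Fin n → ℝ}
    (hx : LinearIndependent ℝ fun i : Fin n => x i) : (sampleCov n x k).PosDef := by
  refine PosDef.of_dotProduct_mulVec_pos (sampleCov_posSemidef n x k).isHermitian fun v hv => ?_
  obtain ⟨i, hi⟩ : ∃ i : Fin n, x i ⬝ᵥ v ≠ 0 := by
    by_contra! h
    exact hv (eq_zero_of_span_eq_top_of_dotProduct_eq_zero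
      (hx.span_eq_top_of_card_eq_finrank' (by simp)) h)
  have hik : (i : ℕ) ∈ Finset.range k := Finset.mem_range.2 (i.2.trans_le hk)
  have hk₀ : 0 < k := Nat.zero_lt_of_lt (Finset.mem_range.1 hik)
  rw [star_trivial, dotProduct_sampleCov_mulVec]
  exact mul_pos (by positivity) (Finset.sum_pos' (fun _ _ => sq_nonneg _) ⟨i, hik, by positivity⟩)

theorem MeasureTheory.Measure.AbsolutelyContinuous.pi_fin {n : ℕ} {α : Fin n → Type*}
    [∀ i, MeasurableSpace (α i)] {μ ν : (i : Fin n) → Measure (α i)}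
    [∀ i, SigmaFinite (μ i)] [∀ i, SigmaFinite (ν i)] (h : ∀ i, μ i ≪ ν i) :
    Measure.pi μ ≪ Measure.pi ν := by
  induction n with
  | zero => rw [Measure.pi_of_empty μ, Measure.pi_of_empty ν]
  | succ n ih =>
    rw [← (measurePreserving_piFinSuccAbove μ 0).symm.map_eq,
      ← (measurePreserving_piFinSuccAbove ν 0).symm.map_eq]
    exact ((h 0).prod (ih fun i => h _)).map (MeasurableEquiv.measurable _)

lemma gaussianCov_eq_map_sqrt (n : ℕ) {S₀ : Matrix (Fin n) (Fin n) ℝ} (hS₀ : S₀.PosSemidef) :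
    gaussianCov n S₀ hS₀ = (Measure.pi fun _ => gaussianReal 0 1).map (CFC.sqrt S₀ *ᵥ ·) := by
  rw [gaussianCov, CFC.sqrt_eq_cfc, cfc_nnreal_eq_real _ S₀, hS₀.1.cfc_eq]
  simp [IsHermitian.cfc, Function.comp_def, max_eq_left (hS₀.eigenvalues_nonneg _)]

lemma gaussianCov_absolutelyContinuous (n : ℕ) {S₀ : Matrix (Fin n) (Fin n) ℝ}
    (hS₀ : S₀.PosDef) : gaussianCov n S₀ hS₀.posSemidef ≪ volume := by
  have hdet : LinearMap.det (toLin' (CFC.sqrt S₀)) ≠ 0 := by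
    rw [LinearMap.det_toLin', hS₀.posSemidef.det_sqrt, RCLike.sqrt_real]
    exact (Real.sqrt_pos.2 hS₀.det_pos).ne'
  have hpi : (Measure.pi fun _ : Fin n => gaussianReal 0 1) ≪ volume := by
    rw [volume_pi]
    exact Measure.AbsolutelyContinuous.pi_fin fun _ =>
      gaussianReal_absolutelyContinuous 0 one_ne_zero
  rw [gaussianCov_eq_map_sqrt]
  refine (hpi.map (toLin' (CFC.sqrt S₀)).continuous_of_finiteDimensional.measurable).trans ?_
  rw [Measure.map_linearMap_addHaar_eq_smul_addHaar volume hdet]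
  exact Measure.smul_absolutelyContinuous

lemma gaussianCov_submodule_eq_zero (n : ℕ) {S₀ : Matrix (Fin n) (Fin n) ℝ} (hS₀ : S₀.PosDef)
    {p : Submodule ℝ (Fin n → ℝ)} (hp : p ≠ ⊤) : gaussianCov n S₀ hS₀.posSemidef p = 0 :=
  gaussianCov_absolutelyContinuous n hS₀ (Measure.addHaar_submodule volume p hp)

lemma ProbabilityTheory.iIndepFun.indepFun_fin_prefix {Ω β : Type*} [MeasurableSpace Ω]
    {μ : Measure Ω} [MeasurableSpace β] {X : ℕ → Ω → β} (hX : ∀ i, Measurable (X i))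
    (hindep : iIndepFun X μ) (j : ℕ) : IndepFun (fun ω (i : Fin j) => X i ω) (X j) μ := by
  have hprefix := hindep.indepFun_finset (Finset.range j) {j} (by simp) hX
  exact hprefix.comp (φ := fun v (i : Fin j) => v ⟨i, Finset.mem_range.2 i.2⟩)
    (measurable_pi_lambda _ fun i => measurable_pi_apply _)
    (measurable_pi_apply (X := fun _ : ({j} : Finset ℕ) => β) ⟨j, Finset.mem_singleton_self j⟩)

section LinearIndependent

variable {Ω E : Type*} [MeasurableSpace Ω] {μ : Measure Ω} [NormedAddCommGroup E]
  [NormedSpace ℝ E] [FiniteDimensional ℝ E] [MeasurableSpace E] [BorelSpace E]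

lemma measurable_linearIndependent_imp_snoc (j : ℕ) :
    Measurable fun q : (Fin j → E) × E =>
      LinearIndependent ℝ q.1 → LinearIndependent ℝ (Fin.snoc q.1 q.2 : Fin (j + 1) → E) :=
  (measurableSet_setOfPred.1 (isOpen_setOfPred_linearIndependent.preimage
    continuous_fst).measurableSet).imp
  (measurableSet_setOfPred.1 (isOpen_setOfPred_linearIndependent.preimage
    (continuous_fst.finSnoc continuous_snd)).measurableSet)

lemma ae_linearIndependent_snoc [IsFiniteMeasure μ] {j : ℕ} (hj : j < finrank ℝ E)
    {Y : Ω → Fin j → E} {Z : Ω → E} (hY : Measurable Y) (hZ : Measurable Z)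
    (hYZ : IndepFun Y Z μ) (hZ_null : ∀ p : Submodule ℝ E, p ≠ ⊤ → μ.map Z p = 0)
    (hY_li : ∀ᵐ ω ∂μ, LinearIndependent ℝ (Y ω)) :
    ∀ᵐ ω ∂μ, LinearIndependent ℝ (Fin.snoc (Y ω) (Z ω) : Fin (j + 1) → E) := by
  have hprod : ∀ᵐ q ∂(μ.map Y).prod (μ.map Z),
      LinearIndependent ℝ q.1 → LinearIndependent ℝ (Fin.snoc q.1 q.2 : Fin (j + 1) → E) := by
    rw [Measure.ae_prod_iff_ae_ae (measurable_linearIndependent_imp_snoc j).setOf]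
    refine ae_of_all _ fun y => ?_
    have hspan : Submodule.span ℝ (Set.range y) ≠ ⊤ := fun h =>
      (finrank_le_of_span_eq_top h).not_gt (by simpa using hj)
    refine measure_mono_null (fun z (hz : ¬ (_ → _)) => ?_) (hZ_null _ hspan)
    simp only [linearIndependent_finSnoc, Classical.not_imp, not_and, not_not] at hz
    exact hz.2 hz.1
  rw [← (indepFun_iff_map_prod_eq_prod_map_map hY.aemeasurable hZ.aemeasurable).1 hYZ] at hprod
  filter_upwards [hY_li, ae_of_ae_map (hY.prodMk hZ).aemeasurable hprod] with ω h₁ h₂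
  exact h₂ h₁

lemma ae_linearIndependent_of_iIndepFun [IsProbabilityMeasure μ] {X : ℕ → Ω → E}
    (hX : ∀ i, Measurable (X i)) (hindep : iIndepFun X μ)
    (hnull : ∀ i, ∀ p : Submodule ℝ E, p ≠ ⊤ → μ.map (X i) p = 0) :
    ∀ j ≤ finrank ℝ E, ∀ᵐ ω ∂μ, LinearIndependent ℝ fun i : Fin j => X i ω
  | 0, _ => ae_of_all _ fun _ => linearIndependent_empty_type
  | j + 1, hj => by
    have hsnoc : ∀ ω,
        (fun i : Fin (j + 1) => X i ω) = Fin.snoc (fun i : Fin j => X i ω) (X j ω) :=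
      fun ω => funext <| Fin.lastCases (by simp) (by simp)
    simp only [hsnoc]
    exact ae_linearIndependent_snoc hj (measurable_pi_lambda _ fun i => hX i) (hX j)
      (hindep.indepFun_fin_prefix hX j) (hnull j)
      (ae_linearIndependent_of_iIndepFun hX hindep hnull j (Nat.le_of_succ_le hj))

end LinearIndependent

theorem sampleCov_posDef_ae_general (n : ℕ)
    (S₀ : Matrix (Fin n) (Fin n) ℝ) (hS₀ : S₀.PosDef)
    {Ω : Type*} [MeasurableSpace Ω] (μ : Measure Ω) [IsProbabilityMeasure μ]
    (X : ℕ → Ω → (Fin n → ℝ)) (hmeas : ∀ i, Measurable (X i))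
    (hindep : iIndepFun X μ)
    (hdist : ∀ i, Measure.map (X i) μ = gaussianCov n S₀ hS₀.posSemidef)
    (k : ℕ) (hk : n ≤ k) :
    ∀ᵐ ω ∂μ, (sampleCov n (fun i => X i ω) k).PosDef := by
  have hnull (i : ℕ) (p : Submodule ℝ (Fin n → ℝ)) (hp : p ≠ ⊤) : μ.map (X i) p = 0 := by
    rw [hdist i]
    exact gaussianCov_submodule_eq_zero n hS₀ hp
  filter_upwards [ae_linearIndependent_of_iIndepFun hmeas hindep hnull n (by simp)] with ω hω
  exact sampleCov_posDef_of_linearIndependent hk hω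

/-- Let `S₀ = Σ₀` be a positive definite real symmetric `n × n` matrix and let
`X 0, X 1, …` be i.i.d. random vectors in `ℝⁿ`, each a centered multivariate Gaussian
with covariance `Σ₀`.  If `k ≥ n`, the sample covariance `S_k` is positive definite
almost surely. -/
theorem sampleCov_posDef_ae (n : ℕ) (hn : 0 < n)
    (S₀ : Matrix (Fin n) (Fin n) ℝ) (hS₀ : S₀.PosDef)
    {Ω : Type*} [MeasurableSpace Ω] (μ : Measure Ω) [IsProbabilityMeasure μ]
    (X : ℕ → Ω → (Fin n → ℝ)) (hmeas : ∀ i, Measurable (X i))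
    (hindep : iIndepFun X μ)
    (hdist : ∀ i, Measure.map (X i) μ = gaussianCov n S₀ hS₀.posSemidef)
    (k : ℕ) (hk : n ≤ k) :
    ∀ᵐ ω ∂μ, (sampleCov n (fun i => X i ω) k).PosDef :=
  sampleCov_posDef_ae_general n S₀ hS₀ μ X hmeas hindep hdist k hk
end
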